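/- arXiv:2009.14328 — 5 statements merged into one kernel-verified Lean document; each statement's English description precedes it below -/
import Mathlib

section
/- Let G be a strictly proper rational transfer matrix (every entry is a rational function with strictly smaller numerator degree than denominator degree) and U a proper rational transfer matrix. Then Y = I + G·U is invertible as a matrix over the field of rational functions, and Y⁻¹ is proper. -/
set_option synthInstance.maxHeartbeats 1000000
set_option maxHeartbeats 1000000

noncomputable section

/-- A rational function is proper if its numerator degree does not exceed its denominator
degree (finite value at infinity). -/
def RatFunc.Proper (r : RatFunc ℝ) : Prop := r.num.degree ≤ r.denom.degree

/-- A rational function is strictly proper if its numerator degree is strictly smaller than its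
denominator degree (zero value at infinity). -/
def RatFunc.StrictlyProper (r : RatFunc ℝ) : Prop := r.num.degree < r.denom.degree

namespace IOPAux

open RatFunc Polynomial

lemma proper_iff (r : RatFunc ℝ) : r.Proper ↔ r = 0 ∨ r.intDegree ≤ 0 := by
  rcases eq_or_ne r 0 with h | h
  · subst h
    simp [RatFunc.Proper]
  · have hn : r.num ≠ 0 := RatFunc.num_ne_zero h
    rw [RatFunc.Proper, Polynomial.degree_eq_natDegree hn,
      Polynomial.degree_eq_natDegree r.denom_ne_zero, RatFunc.intDegree]
    simp [h, sub_nonpos, Nat.cast_le]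

lemma sp_iff (r : RatFunc ℝ) : r.StrictlyProper ↔ r = 0 ∨ r.intDegree < 0 := by
  rcases eq_or_ne r 0 with h | h
  · subst h
    simp [RatFunc.StrictlyProper, RatFunc.num_zero, RatFunc.denom_zero]
  · have hn : r.num ≠ 0 := RatFunc.num_ne_zero h
    rw [RatFunc.StrictlyProper, Polynomial.degree_eq_natDegree hn,
      Polynomial.degree_eq_natDegree r.denom_ne_zero, RatFunc.intDegree]
    simp [h, sub_neg, Nat.cast_lt]

lemma proper_zero : (0 : RatFunc ℝ).Proper := by rw [proper_iff]; left; rfl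
lemma proper_one : (1 : RatFunc ℝ).Proper := by rw [proper_iff]; right; simp
lemma sp_zero : (0 : RatFunc ℝ).StrictlyProper := by rw [sp_iff]; left; rfl

lemma proper_of_sp {r : RatFunc ℝ} (h : r.StrictlyProper) : r.Proper := by
  rw [sp_iff] at h; rw [proper_iff]
  exact h.imp id le_of_lt

lemma proper_neg {r : RatFunc ℝ} (h : r.Proper) : (-r).Proper := by
  rw [proper_iff] at h ⊢
  rcases h with h | h
  · left; simp [h]
  · right; rwa [RatFunc.intDegree_neg]

lemma sp_neg {r : RatFunc ℝ} (h : r.StrictlyProper) : (-r).StrictlyProper := by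
  rw [sp_iff] at h ⊢
  rcases h with h | h
  · left; simp [h]
  · right; rwa [RatFunc.intDegree_neg]

lemma proper_add {x y : RatFunc ℝ} (hx : x.Proper) (hy : y.Proper) : (x + y).Proper := by
  rcases eq_or_ne y 0 with h | h
  · simpa [h] using hx
  rcases eq_or_ne (x + y) 0 with hxy | hxy
  · rw [proper_iff]; left; exact hxy
  rw [proper_iff] at hx hy ⊢
  right
  refine le_trans (RatFunc.intDegree_add_le h hxy) (max_le ?_ ?_)
  · rcases hx with hx | hx
    · simp [hx]
    · exact hx
  · rcases hy with hy | hy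
    · exact absurd hy h
    · exact hy

lemma sp_add {x y : RatFunc ℝ} (hx : x.StrictlyProper) (hy : y.StrictlyProper) :
    (x + y).StrictlyProper := by
  rcases eq_or_ne x 0 with h0 | h0
  · simpa [h0] using hy
  rcases eq_or_ne y 0 with h | h
  · simpa [h] using hx
  rcases eq_or_ne (x + y) 0 with hxy | hxy
  · rw [sp_iff]; left; exact hxy
  rw [sp_iff] at hx hy ⊢
  right
  refine lt_of_le_of_lt (RatFunc.intDegree_add_le h hxy) (max_lt ?_ ?_)
  · exact hx.resolve_left h0
  · rcases hy with hy | hy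
    · exact absurd hy h
    · exact hy

lemma proper_mul {x y : RatFunc ℝ} (hx : x.Proper) (hy : y.Proper) : (x * y).Proper := by
  rcases eq_or_ne x 0 with h | h
  · rw [proper_iff]; left; simp [h]
  rcases eq_or_ne y 0 with h' | h'
  · rw [proper_iff]; left; simp [h']
  rw [proper_iff] at hx hy ⊢
  right
  rw [RatFunc.intDegree_mul h h']
  have hx' := hx.resolve_left h
  have hy' := hy.resolve_left h'
  omega

lemma sp_mul_proper {x y : RatFunc ℝ} (hx : x.StrictlyProper) (hy : y.Proper) :
    (x * y).StrictlyProper := by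
  rcases eq_or_ne x 0 with h | h
  · rw [sp_iff]; left; simp [h]
  rcases eq_or_ne y 0 with h' | h'
  · rw [sp_iff]; left; simp [h']
  rw [sp_iff] at hx
  rw [proper_iff] at hy
  rw [sp_iff]
  right
  rw [RatFunc.intDegree_mul h h']
  have hx' := hx.resolve_left h
  have hy' := hy.resolve_left h'
  omega

lemma one_add_sp_ne_zero {s : RatFunc ℝ} (hs : s.StrictlyProper) : 1 + s ≠ 0 := by
  intro h
  have : s = -1 := by linear_combination h
  rw [this, sp_iff] at hs
  rcases hs with h' | h'
  · exact one_ne_zero (neg_eq_zero.mp h')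
  · rw [RatFunc.intDegree_neg, RatFunc.intDegree_one] at h'
    exact lt_irrefl 0 h'

lemma intDegree_one_add_sp {s : RatFunc ℝ} (hs : s.StrictlyProper) :
    (1 + s).intDegree = 0 := by
  rcases eq_or_ne s 0 with h | h
  · simp [h]
  have hne := one_add_sp_ne_zero hs
  have hsd : s.intDegree < 0 := (sp_iff s).mp hs |>.resolve_left h
  have h1 : (1 + s).intDegree ≤ 0 := by
    have := RatFunc.intDegree_add_le (x := 1) h hne
    simp only [RatFunc.intDegree_one] at this
    exact this.trans (max_le le_rfl hsd.le)
  have h2 : (0 : ℤ) ≤ (1 + s).intDegree := by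
    have heq : (1 : RatFunc ℝ) = (1 + s) + (-s) := by ring
    have hns : (-s : RatFunc ℝ) ≠ 0 := neg_ne_zero.mpr h
    have := RatFunc.intDegree_add_le (x := 1 + s) hns (by rw [← heq]; exact one_ne_zero)
    rw [← heq, RatFunc.intDegree_one, RatFunc.intDegree_neg] at this
    rcases le_max_iff.mp this with h' | h'
    · exact h'
    · omega
  omega

lemma inv_one_add_sp_proper {s : RatFunc ℝ} (hs : s.StrictlyProper) : (1 + s)⁻¹.Proper := by
  have hne := one_add_sp_ne_zero hs
  rw [proper_iff]
  right
  have h0 : (1 + s) * (1 + s)⁻¹ = 1 := mul_inv_cancel₀ hne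
  have := RatFunc.intDegree_mul hne (inv_ne_zero hne)
  rw [h0, RatFunc.intDegree_one, intDegree_one_add_sp hs] at this
  omega

lemma prod_proper {ι : Type*} (s : Finset ι) (f : ι → RatFunc ℝ)
    (h : ∀ i ∈ s, (f i).Proper) : (∏ i ∈ s, f i).Proper :=
  Finset.prod_induction f RatFunc.Proper (fun _ _ => proper_mul) proper_one h

lemma sum_sp {ι : Type*} (s : Finset ι) (f : ι → RatFunc ℝ)
    (h : ∀ i ∈ s, (f i).StrictlyProper) : (∑ i ∈ s, f i).StrictlyProper :=
  Finset.sum_induction f RatFunc.StrictlyProper (fun _ _ => sp_add) sp_zero h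

end IOPAux

namespace IOPAux

lemma sign_smul_proper {α : Type*} [Fintype α] [DecidableEq α] (σ : Equiv.Perm α)
    {x : RatFunc ℝ} (hx : x.Proper) : (Equiv.Perm.sign σ • x).Proper := by
  rcases Int.units_eq_one_or (Equiv.Perm.sign σ) with h | h <;> rw [h] <;> simp only
    [one_smul, Units.neg_smul, neg_smul]
  · exact hx
  · simpa using proper_neg hx

lemma sign_smul_sp {α : Type*} [Fintype α] [DecidableEq α] (σ : Equiv.Perm α)
    {x : RatFunc ℝ} (hx : x.StrictlyProper) : (Equiv.Perm.sign σ • x).StrictlyProper := by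
  rcases Int.units_eq_one_or (Equiv.Perm.sign σ) with h | h <;> rw [h] <;> simp only
    [one_smul, Units.neg_smul, neg_smul]
  · exact hx
  · simpa using sp_neg hx

lemma det_proper {α : Type*} [Fintype α] [DecidableEq α] (A : Matrix α α (RatFunc ℝ))
    (hA : ∀ i j, (A i j).Proper) : A.det.Proper := by
  rw [Matrix.det_apply]
  apply Finset.sum_induction _ RatFunc.Proper (fun _ _ => proper_add) proper_zero
  intro σ _
  exact sign_smul_proper σ (prod_proper _ _ fun i _ => hA _ _)

lemma prod_one_add_sp {ι : Type*} (s : Finset ι) (f : ι → RatFunc ℝ)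
    (h : ∀ i ∈ s, (f i).StrictlyProper) :
    ((∏ i ∈ s, (1 + f i)) - 1).StrictlyProper := by
  classical
  induction s using Finset.induction_on with
  | empty => simpa using sp_zero
  | @insert a s ha ih =>
    rw [Finset.prod_insert ha]
    have hP : ((∏ i ∈ s, (1 + f i)) - 1).StrictlyProper := ih fun i hi => h i (Finset.mem_insert_of_mem hi)
    have hPp : (∏ i ∈ s, (1 + f i)).Proper :=
      prod_proper _ _ fun i hi => proper_add proper_one (proper_of_sp (h i (Finset.mem_insert_of_mem hi)))
    have heq : (1 + f a) * (∏ i ∈ s, (1 + f i)) - 1 =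
        ((∏ i ∈ s, (1 + f i)) - 1) + f a * (∏ i ∈ s, (1 + f i)) := by ring
    rw [heq]
    exact sp_add hP (sp_mul_proper (h a (Finset.mem_insert_self a s)) hPp)

lemma det_one_add_sp {α : Type*} [Fintype α] [DecidableEq α] (N : Matrix α α (RatFunc ℝ))
    (hN : ∀ i j, (N i j).StrictlyProper) :
    ((1 + N : Matrix α α (RatFunc ℝ)).det - 1).StrictlyProper := by
  set Y : Matrix α α (RatFunc ℝ) := 1 + N with hY
  have hYp : ∀ i j, (Y i j).Proper := by
    intro i j
    rcases eq_or_ne i j with rfl | hij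
    · simpa [hY, Matrix.add_apply, Matrix.one_apply_eq] using
        proper_add proper_one (proper_of_sp (hN i i))
    · simpa [hY, Matrix.add_apply, Matrix.one_apply_ne hij] using proper_of_sp (hN i j)
  rw [Matrix.det_apply]
  rw [← Finset.add_sum_erase Finset.univ _ (Finset.mem_univ (1 : Equiv.Perm α))]
  have heq : ∀ a b : RatFunc ℝ, a + b - 1 = (a - 1) + b := fun a b => by ring
  rw [heq]
  apply sp_add
  · have h1 : (Equiv.Perm.sign (1 : Equiv.Perm α) • ∏ i, Y ((1 : Equiv.Perm α) i) i : RatFunc ℝ)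
        = ∏ i, (1 + N i i) := by
      simp [hY, Matrix.add_apply, Matrix.one_apply_eq]
    rw [h1]
    exact prod_one_add_sp _ _ fun i _ => hN i i
  · apply sum_sp
    intro σ hσ
    have hσ1 : σ ≠ 1 := (Finset.mem_erase.mp hσ).1
    obtain ⟨i₀, hi₀⟩ : ∃ i, σ i ≠ i := by
      by_contra hc
      push_neg at hc
      exact hσ1 (Equiv.ext hc)
    apply sign_smul_sp
    rw [← Finset.mul_prod_erase Finset.univ _ (Finset.mem_univ i₀)]
    have hYsp : (Y (σ i₀) i₀).StrictlyProper := by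
      simpa [hY, Matrix.add_apply, Matrix.one_apply_ne hi₀] using hN (σ i₀) i₀
    exact sp_mul_proper hYsp (prod_proper _ _ fun i _ => hYp _ _)

end IOPAux

open IOPAux

/-- IOP invertibility step: if `G` is strictly proper and `U` is proper, then `Y = I + G U`
is invertible over the field of rational functions and `Y⁻¹` is proper. -/
theorem iop_Y_invertible {n m : Type*} [Fintype n] [Fintype m] [DecidableEq n]
    (G : Matrix n m (RatFunc ℝ)) (U : Matrix m n (RatFunc ℝ))
    (hG : ∀ i j, (G i j).StrictlyProper) (hU : ∀ i j, (U i j).Proper) :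
    IsUnit ((1 + G * U : Matrix n n (RatFunc ℝ))).det ∧
      ∀ i j, (((1 + G * U : Matrix n n (RatFunc ℝ))⁻¹) i j).Proper := by
  set N : Matrix n n (RatFunc ℝ) := G * U with hNdef
  have hN : ∀ i j, (N i j).StrictlyProper := by
    intro i j
    rw [hNdef, Matrix.mul_apply]
    exact sum_sp _ _ fun k _ => sp_mul_proper (hG i k) (hU k j)
  have hdet : ((1 + N : Matrix n n (RatFunc ℝ)).det - 1).StrictlyProper := det_one_add_sp N hN
  have hdet1 : (1 + N : Matrix n n (RatFunc ℝ)).det = 1 + ((1 + N : Matrix n n (RatFunc ℝ)).det - 1) := by ring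
  have hne : (1 + N : Matrix n n (RatFunc ℝ)).det ≠ 0 := by
    rw [hdet1]; exact one_add_sp_ne_zero hdet
  refine ⟨isUnit_iff_ne_zero.mpr hne, ?_⟩
  intro i j
  rw [Matrix.inv_def, Matrix.smul_apply, Ring.inverse_eq_inv, smul_eq_mul]
  apply proper_mul
  · rw [hdet1]
    exact inv_one_add_sp_proper hdet
  · rw [Matrix.adjugate_apply]
    apply det_proper
    intro a b
    rcases eq_or_ne a j with rfl | hab
    · rw [Matrix.updateRow_self]
      rcases eq_or_ne b i with rfl | hbi
      · simpa [Pi.single_apply] using proper_one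
      · simpa [Pi.single_apply, hbi] using proper_zero
    · rw [Matrix.updateRow_ne hab]
      rcases eq_or_ne a b with rfl | hab'
      · simpa [Matrix.add_apply, Matrix.one_apply_eq] using
          proper_add proper_one (proper_of_sp (hN a a))
      · simpa [Matrix.add_apply, Matrix.one_apply_ne hab'] using proper_of_sp (hN a b)
end
end

section
/- State-feedback SLP necessity: suppose [[zI - A, -B],[-K, I]]·[[Φx, S_xu],[Φu, S_uu]] = I over rational transfer matrices, with K proper and Φx, Φu stable proper. Then (zI - A)Φx = I + BΦu, hence Φx is strictly proper (Φx ∈ z⁻¹RH∞), and Φu = K·Φx is also strictly proper. -/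
set_option synthInstance.maxHeartbeats 1000000
set_option maxHeartbeats 1000000

noncomputable section

/-- A rational function is stable if all (complex) roots of its denominator lie strictly inside
the unit disc. -/
def RatFunc.Stable (r : RatFunc ℝ) : Prop :=
  ∀ w : ℂ, (r.denom.map (algebraMap ℝ ℂ)).IsRoot w → ‖w‖ < 1

/-!
A rational function is proper iff its valuation at infinity (`exp` of the degree difference)
is `≤ 1`, and strictly proper iff it is `< 1`. Hence proper functions form a ring in which the
strictly proper ones form an ideal. The `(1,1)` block of the identity gives
`z Φx = I + B Φu + A Φx`, which is proper; since `z` has valuation `> 1`, every entry of `Φx`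
has valuation `< 1`. The `(2,1)` block gives `Φu = K Φx`, a proper matrix times a strictly
proper one.
-/

namespace Valuation

variable {R Γ₀ : Type*} [Ring R] [LinearOrderedCommMonoidWithZero Γ₀] (v : Valuation R Γ₀)
  {l m n : Type*}

theorem map_matrix_one_apply_le_one [DecidableEq n] (i j : n) :
    v ((1 : Matrix n n R) i j) ≤ 1 := by
  rw [Matrix.one_apply]
  split_ifs <;> simp

theorem map_matrix_map_algebraMap_apply_le_one {A : Type*} [CommSemiring A] [Algebra A R]
    [v.IsTrivialOn A] (M : Matrix l m A) (i : l) (j : m) :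
    v (M.map (algebraMap A R) i j) ≤ 1 :=
  IsTrivialOn.valuation_algebraMap_le_one v (M i j)

theorem map_matrix_mul_apply_le_one [Fintype m] {M : Matrix l m R} {N : Matrix m n R}
    (hM : ∀ i j, v (M i j) ≤ 1) (hN : ∀ i j, v (N i j) ≤ 1) (i : l) (k : n) :
    v ((M * N) i k) ≤ 1 :=
  v.map_sum_le fun j _ => (v.map_mul _ _).trans_le (mul_le_one' (hM i j) (hN j k))

theorem map_matrix_mul_apply_lt_one [Nontrivial Γ₀] [Fintype m]
    {M : Matrix l m R} {N : Matrix m n R}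
    (hM : ∀ i j, v (M i j) ≤ 1) (hN : ∀ i j, v (N i j) < 1) (i : l) (k : n) :
    v ((M * N) i k) < 1 :=
  v.map_sum_lt one_ne_zero fun j _ =>
    (v.map_mul _ _).trans_lt ((mul_le_of_le_one_left' (hM i j)).trans_lt (hN j k))

theorem map_lt_one_of_map_mul_le_one {x y : R} (hx : 1 < v x) (hxy : v (x * y) ≤ 1) :
    v y < 1 := by
  by_contra! hy
  rw [map_mul] at hxy
  exact (hx.trans_le (le_mul_of_one_le_right' hy)).not_ge hxy

theorem map_lt_one_of_smul_one_sub_mul_eq [Fintype n] [DecidableEq n] {x : R}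
    {A : Matrix n n R} {Φ Ψ : Matrix n m R} (hx : 1 < v x)
    (hA : ∀ i j, v (A i j) ≤ 1) (hΦ : ∀ i j, v (Φ i j) ≤ 1) (hΨ : ∀ i j, v (Ψ i j) ≤ 1)
    (h : (x • (1 : Matrix n n R) - A) * Φ = Ψ) (i : n) (j : m) : v (Φ i j) < 1 := by
  rw [Matrix.sub_mul, Matrix.smul_mul, Matrix.one_mul, sub_eq_iff_eq_add] at h
  refine v.map_lt_one_of_map_mul_le_one hx ?_
  have hij := congrFun (congrFun h i) j
  rw [Matrix.smul_apply, smul_eq_mul] at hij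
  rw [hij, Matrix.add_apply]
  exact v.map_add_le (hΨ i j) (v.map_matrix_mul_apply_le_one hA hΦ i j)

end Valuation

namespace RatFunc

open Polynomial WithZero

variable [DecidableEq (RatFunc ℝ)]

theorem proper_iff_inftyValuation_le_one {r : RatFunc ℝ} :
    r.Proper ↔ inftyValuation ℝ r ≤ 1 := by
  rcases eq_or_ne r 0 with rfl | hr
  · simp [Proper]
  rw [Proper, inftyValuation_apply, inftyValuation_of_nonzero _ hr, ← exp_zero, exp_le_exp,
    intDegree, sub_nonpos, degree_eq_natDegree (num_ne_zero hr),
    degree_eq_natDegree r.denom_ne_zero]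
  exact_mod_cast Iff.rfl

theorem strictlyProper_iff_inftyValuation_lt_one {r : RatFunc ℝ} :
    r.StrictlyProper ↔ inftyValuation ℝ r < 1 := by
  rcases eq_or_ne r 0 with rfl | hr
  · simp [StrictlyProper]
  rw [StrictlyProper, inftyValuation_apply, inftyValuation_of_nonzero _ hr, ← exp_zero,
    exp_lt_exp, intDegree, sub_neg, degree_eq_natDegree (num_ne_zero hr),
    degree_eq_natDegree r.denom_ne_zero]
  exact_mod_cast Iff.rfl

end RatFunc

/-- State-feedback SLP (necessity): if
`[[zI - A, -B],[-K, I]] * [[Φx, Sxu],[Φu, Suu]] = I` with `K` proper and `Φx, Φu ∈ RH∞`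
(stable proper), then `(zI - A) Φx = I + B Φu`, `Φx` is strictly proper (`Φx ∈ z⁻¹ RH∞`), and
`Φu = K Φx` is strictly proper as well. -/
theorem state_feedback_slp_necessity {n m : Type*} [Fintype n] [Fintype m]
    [DecidableEq n] [DecidableEq m]
    (A : Matrix n n ℝ) (B : Matrix n m ℝ)
    (K : Matrix m n (RatFunc ℝ))
    (Φx : Matrix n n (RatFunc ℝ)) (Sxu : Matrix n m (RatFunc ℝ))
    (Φu : Matrix m n (RatFunc ℝ)) (Suu : Matrix m m (RatFunc ℝ))
    (h : Matrix.fromBlocks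
          ((RatFunc.X : RatFunc ℝ) • (1 : Matrix n n (RatFunc ℝ))
            - A.map (algebraMap ℝ (RatFunc ℝ)))
          (-(B.map (algebraMap ℝ (RatFunc ℝ)))) (-K) (1 : Matrix m m (RatFunc ℝ))
          * Matrix.fromBlocks Φx Sxu Φu Suu = 1)
    (hK : ∀ i j, (K i j).Proper)
    (hΦx : ∀ i j, (Φx i j).Proper ∧ (Φx i j).Stable)
    (hΦu : ∀ i j, (Φu i j).Proper ∧ (Φu i j).Stable) :
    ((RatFunc.X : RatFunc ℝ) • (1 : Matrix n n (RatFunc ℝ))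
        - A.map (algebraMap ℝ (RatFunc ℝ))) * Φx
      = 1 + (B.map (algebraMap ℝ (RatFunc ℝ))) * Φu ∧
    (∀ i j, (Φx i j).StrictlyProper) ∧
    Φu = K * Φx ∧
    (∀ i j, (Φu i j).StrictlyProper) := by
  classical
  rw [Matrix.fromBlocks_multiply, ← Matrix.fromBlocks_one, Matrix.fromBlocks_inj] at h
  obtain ⟨hx, -, hu, -⟩ := h
  rw [Matrix.neg_mul, ← sub_eq_add_neg, sub_eq_iff_eq_add] at hx
  rw [Matrix.neg_mul, Matrix.one_mul, neg_add_eq_sub, sub_eq_zero] at hu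
  let v := RatFunc.inftyValuation ℝ
  have hv_le {r : RatFunc ℝ} : r.Proper → v r ≤ 1 :=
    RatFunc.proper_iff_inftyValuation_le_one.mp
  have hrhs i j :
      v ((1 + B.map (algebraMap ℝ (RatFunc ℝ)) * Φu : Matrix n n (RatFunc ℝ)) i j) ≤ 1 :=
    v.map_add_le (v.map_matrix_one_apply_le_one i j)
      (v.map_matrix_mul_apply_le_one (v.map_matrix_map_algebraMap_apply_le_one B)
        (fun i j => hv_le (hΦu i j).1) i j)
  have hΦx_lt := v.map_lt_one_of_smul_one_sub_mul_eq (x := RatFunc.X)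
    (by simp [v, ← WithZero.exp_zero]) (v.map_matrix_map_algebraMap_apply_le_one A)
    (fun i j => hv_le (hΦx i j).1) hrhs hx
  refine ⟨hx, fun i j => RatFunc.strictlyProper_iff_inftyValuation_lt_one.mpr (hΦx_lt i j), hu,
    fun i j => ?_⟩
  rw [RatFunc.strictlyProper_iff_inftyValuation_lt_one, hu]
  exact v.map_matrix_mul_apply_lt_one (fun i j => hv_le (hK i j)) hΦx_lt i j
end
end

section
/- Output-feedback controller recovery with direct feedthrough: under the setup of the output-feedback realization with (I - R)S = S(I - R) = I, if Φ_xx and the block S_yy - S_yx·Φ_xx⁻¹·Φ_xy are invertible, and K₀ := Φ_uy - Φ_ux·Φ_xx⁻¹·Φ_xy, then I - D·K = (S_yy - S_yx·Φ_xx⁻¹·Φ_xy)⁻¹ and K = K₀·(I + D·K₀)⁻¹. -/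
set_option synthInstance.maxHeartbeats 1000000
set_option maxHeartbeats 1000000

noncomputable section

/-- A 3×3 block matrix. -/
def blk3 {n m p α : Type*}
    (M11 : Matrix n n α) (M12 : Matrix n m α) (M13 : Matrix n p α)
    (M21 : Matrix m n α) (M22 : Matrix m m α) (M23 : Matrix m p α)
    (M31 : Matrix p n α) (M32 : Matrix p m α) (M33 : Matrix p p α) :
    Matrix (n ⊕ (m ⊕ p)) (n ⊕ (m ⊕ p)) α :=
  Matrix.fromBlocks M11 (Matrix.fromCols M12 M13) (Matrix.fromRows M21 M31)
    (Matrix.fromBlocks M22 M23 M32 M33)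

/-!
The second and third block rows of `(I - R) S = I` say `Φux = K Syx`, `Φuy = K Syy`,
`Syx = C Φxx + D Φux` and `Syy = I + C Φxy + D Φuy`. Multiplying through by `Φxx⁻¹ Φxy` shows that
`Y := Syy - Syx Φxx⁻¹ Φxy` equals `I + D K₀` and that `K₀ = K Y`. Hence `(I - D K) Y = Y - D K₀ = I`,
so `Y` is invertible with inverse `I - D K`, and `K = K Y Y⁻¹ = K₀ (I + D K₀)⁻¹`.
-/

section BlockMatrix

open Matrix

variable {n m p α : Type*}

theorem blk3_inj {M11 N11 : Matrix n n α} {M12 N12 : Matrix n m α} {M13 N13 : Matrix n p α}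
    {M21 N21 : Matrix m n α} {M22 N22 : Matrix m m α} {M23 N23 : Matrix m p α}
    {M31 N31 : Matrix p n α} {M32 N32 : Matrix p m α} {M33 N33 : Matrix p p α} :
    blk3 M11 M12 M13 M21 M22 M23 M31 M32 M33 = blk3 N11 N12 N13 N21 N22 N23 N31 N32 N33 ↔
      M11 = N11 ∧ M12 = N12 ∧ M13 = N13 ∧ M21 = N21 ∧ M22 = N22 ∧ M23 = N23 ∧
        M31 = N31 ∧ M32 = N32 ∧ M33 = N33 := by
  simp only [blk3, fromBlocks_inj, fromCols_ext_iff, fromRows_ext_iff]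
  tauto

theorem blk3_sub_blk3 [AddGroup α]
    (M11 N11 : Matrix n n α) (M12 N12 : Matrix n m α) (M13 N13 : Matrix n p α)
    (M21 N21 : Matrix m n α) (M22 N22 : Matrix m m α) (M23 N23 : Matrix m p α)
    (M31 N31 : Matrix p n α) (M32 N32 : Matrix p m α) (M33 N33 : Matrix p p α) :
    blk3 M11 M12 M13 M21 M22 M23 M31 M32 M33 - blk3 N11 N12 N13 N21 N22 N23 N31 N32 N33 =
      blk3 (M11 - N11) (M12 - N12) (M13 - N13) (M21 - N21) (M22 - N22) (M23 - N23)
        (M31 - N31) (M32 - N32) (M33 - N33) := by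
  ext (i | i | i) (j | j | j) <;> simp [blk3]

theorem blk3_one [Zero α] [One α] [DecidableEq n] [DecidableEq m] [DecidableEq p] :
    blk3 (1 : Matrix n n α) 0 0 0 (1 : Matrix m m α) 0 0 0 (1 : Matrix p p α) = 1 := by
  ext (i | i | i) (j | j | j) <;> simp [blk3, one_apply]

theorem blk3_mul_blk3 [Fintype n] [Fintype m] [Fintype p] [NonUnitalNonAssocSemiring α]
    (M11 N11 : Matrix n n α) (M12 N12 : Matrix n m α) (M13 N13 : Matrix n p α)
    (M21 N21 : Matrix m n α) (M22 N22 : Matrix m m α) (M23 N23 : Matrix m p α)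
    (M31 N31 : Matrix p n α) (M32 N32 : Matrix p m α) (M33 N33 : Matrix p p α) :
    blk3 M11 M12 M13 M21 M22 M23 M31 M32 M33 * blk3 N11 N12 N13 N21 N22 N23 N31 N32 N33 =
      blk3 (M11 * N11 + M12 * N21 + M13 * N31) (M11 * N12 + M12 * N22 + M13 * N32)
        (M11 * N13 + M12 * N23 + M13 * N33) (M21 * N11 + M22 * N21 + M23 * N31)
        (M21 * N12 + M22 * N22 + M23 * N32) (M21 * N13 + M22 * N23 + M23 * N33)
        (M31 * N11 + M32 * N21 + M33 * N31) (M31 * N12 + M32 * N22 + M33 * N32)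
        (M31 * N13 + M32 * N23 + M33 * N33) := by
  ext (i | i | i) (j | j | j) <;> simp [blk3, mul_apply, Fintype.sum_sum_type, add_assoc]

end BlockMatrix

section ControllerRecovery

open Matrix

variable {n m p α : Type*}

theorem closedLoop_relations [Fintype n] [Fintype m] [Fintype p]
    [DecidableEq n] [DecidableEq m] [DecidableEq p] [Ring α]
    {F : Matrix n n α} {G : Matrix n m α} {K : Matrix m p α} {C : Matrix p n α} {D : Matrix p m α}
    {Φxx : Matrix n n α} {Sxu : Matrix n m α} {Φxy : Matrix n p α}
    {Φux : Matrix m n α} {Suu : Matrix m m α} {Φuy : Matrix m p α}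
    {Syx : Matrix p n α} {Syu : Matrix p m α} {Syy : Matrix p p α}
    (h : (1 - blk3 F G 0 0 0 K C D 0) * blk3 Φxx Sxu Φxy Φux Suu Φuy Syx Syu Syy = 1) :
    Φux = K * Syx ∧ Φuy = K * Syy ∧ Syx = C * Φxx + D * Φux ∧ Syy = 1 + C * Φxy + D * Φuy := by
  rw [← blk3_one, blk3_sub_blk3, blk3_mul_blk3, blk3_inj] at h
  obtain ⟨-, -, -, hux, -, huy, hyx, -, hyy⟩ := h
  simp only [zero_sub, sub_zero, sub_self, Matrix.zero_mul, Matrix.one_mul, Matrix.neg_mul]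
    at hux huy hyx hyy
  refine ⟨?_, ?_, ?_, ?_⟩
  · exact sub_eq_zero.mp (by rw [← hux]; abel)
  · exact sub_eq_zero.mp (by rw [← huy]; abel)
  · exact sub_eq_zero.mp (by rw [← hyx]; abel)
  · rw [← hyy]; abel

variable [CommRing α] {Φxx : Matrix n n α} {Φxy : Matrix n p α} {Φux : Matrix m n α}
  {Φuy : Matrix m p α} {Syx : Matrix p n α} {Syy : Matrix p p α}

theorem schurComplement_eq_one_add_mul [Fintype n] [Fintype m] [DecidableEq n] [DecidableEq p]
    {C : Matrix p n α} {D : Matrix p m α} (hΦxx : IsUnit Φxx.det)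
    (hyx : Syx = C * Φxx + D * Φux) (hyy : Syy = 1 + C * Φxy + D * Φuy) :
    Syy - Syx * Φxx⁻¹ * Φxy = 1 + D * (Φuy - Φux * Φxx⁻¹ * Φxy) := by
  rw [hyx, hyy, Matrix.add_mul, Matrix.add_mul, Matrix.mul_assoc C, mul_nonsing_inv _ hΦxx,
    Matrix.mul_one, Matrix.mul_sub, Matrix.mul_assoc D Φux, Matrix.mul_assoc D]
  abel

theorem gain_eq_mul_schurComplement [Fintype n] [Fintype p] [DecidableEq n] {K : Matrix m p α}
    (hux : Φux = K * Syx) (huy : Φuy = K * Syy) :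
    Φuy - Φux * Φxx⁻¹ * Φxy = K * (Syy - Syx * Φxx⁻¹ * Φxy) := by
  rw [hux, huy, Matrix.mul_sub, Matrix.mul_assoc, Matrix.mul_assoc, Matrix.mul_assoc]

theorem feedthrough_inversion [Fintype m] [Fintype p] [DecidableEq p] {K K₀ : Matrix m p α}
    {D : Matrix p m α} {Y : Matrix p p α} (hY : Y = 1 + D * K₀) (hK₀ : K₀ = K * Y) :
    1 - D * K = Y⁻¹ ∧ K = K₀ * (1 + D * K₀)⁻¹ := by
  have hinv : (1 - D * K) * Y = 1 := by
    rw [Matrix.sub_mul, Matrix.one_mul, Matrix.mul_assoc, ← hK₀, hY, add_sub_cancel_right]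
  refine ⟨(inv_eq_left_inv hinv).symm, ?_⟩
  rw [← hY, inv_eq_left_inv hinv, hK₀, Matrix.mul_assoc, mul_eq_one_comm.mp hinv, Matrix.mul_one]

end ControllerRecovery

theorem output_feedback_controller_recovery_general {n m p : Type*} [Fintype n] [Fintype m] [Fintype p]
    [DecidableEq n] [DecidableEq m] [DecidableEq p]
    (A : Matrix n n ℝ) (B : Matrix n m ℝ) (C : Matrix p n ℝ) (D : Matrix p m ℝ)
    (K : Matrix m p (RatFunc ℝ))
    (Φxx : Matrix n n (RatFunc ℝ)) (Sxu : Matrix n m (RatFunc ℝ)) (Φxy : Matrix n p (RatFunc ℝ))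
    (Φux : Matrix m n (RatFunc ℝ)) (Suu : Matrix m m (RatFunc ℝ)) (Φuy : Matrix m p (RatFunc ℝ))
    (Syx : Matrix p n (RatFunc ℝ)) (Syu : Matrix p m (RatFunc ℝ)) (Syy : Matrix p p (RatFunc ℝ))
    (R : Matrix (n ⊕ (m ⊕ p)) (n ⊕ (m ⊕ p)) (RatFunc ℝ))
    (S : Matrix (n ⊕ (m ⊕ p)) (n ⊕ (m ⊕ p)) (RatFunc ℝ))
    (hR : R = blk3
      (A.map (algebraMap ℝ (RatFunc ℝ))
        + (1 - (RatFunc.X : RatFunc ℝ)) • (1 : Matrix n n (RatFunc ℝ)))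
      (B.map (algebraMap ℝ (RatFunc ℝ))) 0
      0 0 K
      (C.map (algebraMap ℝ (RatFunc ℝ))) (D.map (algebraMap ℝ (RatFunc ℝ))) 0)
    (hS : S = blk3 Φxx Sxu Φxy Φux Suu Φuy Syx Syu Syy)
    (h1 : (1 - R) * S = 1)
    (hΦxx : IsUnit Φxx.det)
    (K₀ : Matrix m p (RatFunc ℝ)) (hK₀ : K₀ = Φuy - Φux * Φxx⁻¹ * Φxy) :
    1 - D.map (algebraMap ℝ (RatFunc ℝ)) * K = (Syy - Syx * Φxx⁻¹ * Φxy)⁻¹ ∧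
    K = K₀ * (1 + D.map (algebraMap ℝ (RatFunc ℝ)) * K₀)⁻¹ := by
  subst hR hS hK₀
  obtain ⟨hux, huy, hyx, hyy⟩ := closedLoop_relations h1
  exact feedthrough_inversion (schurComplement_eq_one_add_mul hΦxx hyx hyy)
    (gain_eq_mul_schurComplement hux huy)

/-- Output-feedback controller recovery with direct feedthrough: in the output-feedback
realization `R = [[A + (1-z)I, B, 0],[0, 0, K],[C, D, 0]]` with stability matrix `S` (blocks
`Φxx, Sxu, Φxy / Φux, Suu, Φuy / Syx, Syu, Syy`) satisfying `(I - R) S = S (I - R) = I`, if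
`Φxx` and `Syy - Syx Φxx⁻¹ Φxy` are invertible, and `K₀ := Φuy - Φux Φxx⁻¹ Φxy`, then
`I - D K = (Syy - Syx Φxx⁻¹ Φxy)⁻¹` and `K = K₀ (I + D K₀)⁻¹`. -/
theorem output_feedback_controller_recovery {n m p : Type*} [Fintype n] [Fintype m] [Fintype p]
    [DecidableEq n] [DecidableEq m] [DecidableEq p]
    (A : Matrix n n ℝ) (B : Matrix n m ℝ) (C : Matrix p n ℝ) (D : Matrix p m ℝ)
    (K : Matrix m p (RatFunc ℝ)) (hK : ∀ i j, (K i j).Proper)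
    (Φxx : Matrix n n (RatFunc ℝ)) (Sxu : Matrix n m (RatFunc ℝ)) (Φxy : Matrix n p (RatFunc ℝ))
    (Φux : Matrix m n (RatFunc ℝ)) (Suu : Matrix m m (RatFunc ℝ)) (Φuy : Matrix m p (RatFunc ℝ))
    (Syx : Matrix p n (RatFunc ℝ)) (Syu : Matrix p m (RatFunc ℝ)) (Syy : Matrix p p (RatFunc ℝ))
    (R : Matrix (n ⊕ (m ⊕ p)) (n ⊕ (m ⊕ p)) (RatFunc ℝ))
    (S : Matrix (n ⊕ (m ⊕ p)) (n ⊕ (m ⊕ p)) (RatFunc ℝ))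
    (hR : R = blk3
      (A.map (algebraMap ℝ (RatFunc ℝ))
        + (1 - (RatFunc.X : RatFunc ℝ)) • (1 : Matrix n n (RatFunc ℝ)))
      (B.map (algebraMap ℝ (RatFunc ℝ))) 0
      0 0 K
      (C.map (algebraMap ℝ (RatFunc ℝ))) (D.map (algebraMap ℝ (RatFunc ℝ))) 0)
    (hS : S = blk3 Φxx Sxu Φxy Φux Suu Φuy Syx Syu Syy)
    (h1 : (1 - R) * S = 1) (h2 : S * (1 - R) = 1)
    (hΦxx : IsUnit Φxx.det)
    (hYY : IsUnit (Syy - Syx * Φxx⁻¹ * Φxy).det)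
    (K₀ : Matrix m p (RatFunc ℝ)) (hK₀ : K₀ = Φuy - Φux * Φxx⁻¹ * Φxy) :
    1 - D.map (algebraMap ℝ (RatFunc ℝ)) * K = (Syy - Syx * Φxx⁻¹ * Φxy)⁻¹ ∧
    K = K₀ * (1 + D.map (algebraMap ℝ (RatFunc ℝ)) * K₀)⁻¹ :=
  output_feedback_controller_recovery_general A B C D K Φxx Sxu Φxy Φux Suu Φuy Syx Syu Syy R S hR
    hS h1 hΦxx K₀ hK₀
end
end

section
/- Youla stability verification: let (M_l, N_l, V_l, U_l, U_r, N_r, V_r, M_r) satisfy the doubly coprime identity [[M_l, -N_l],[-V_l, U_l]]·[[U_r, N_r],[V_r, M_r]] = I with G = M_l⁻¹N_l, and let Q be arbitrary. Set K = (V_r - M_r Q)(U_r - N_r Q)⁻¹ (assuming U_r - N_r Q invertible). Then [[I, -G],[-K, I]]·[[(U_r - N_r Q)M_l, (U_r - N_r Q)N_l],[(V_r - M_r Q)M_l, I + (V_r - M_r Q)N_l]] = I. -/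
/-- Youla stability verification: let the coprime factors satisfy the doubly coprime identity
`[[M_l, -N_l],[-V_l, U_l]] [[U_r, N_r],[V_r, M_r]] = I` with `G = M_l⁻¹ N_l`, let `Q` be
arbitrary, and set `K = (V_r - M_r Q)(U_r - N_r Q)⁻¹` (with `U_r - N_r Q` invertible). Then
`[[I, -G],[-K, I]] * [[(U_r - N_r Q) M_l, (U_r - N_r Q) N_l],
[(V_r - M_r Q) M_l, I + (V_r - M_r Q) N_l]] = I`. -/
theorem youla_stability {n m : Type*} [Fintype n] [Fintype m]
    [DecidableEq n] [DecidableEq m] {α : Type*} [CommRing α]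
    (Ml : Matrix n n α) (Nl : Matrix n m α) (Vl : Matrix m n α) (Ul : Matrix m m α)
    (Ur : Matrix n n α) (Nr : Matrix n m α) (Vr : Matrix m n α) (Mr : Matrix m m α)
    (Q : Matrix m n α)
    (hdc : Matrix.fromBlocks Ml (-Nl) (-Vl) Ul * Matrix.fromBlocks Ur Nr Vr Mr = 1)
    (hMl : IsUnit Ml.det) (hMr : IsUnit Mr.det)
    (hUNQ : IsUnit (Ur - Nr * Q).det)
    (G : Matrix n m α) (hG : G = Ml⁻¹ * Nl)
    (K : Matrix m n α) (hKdef : K = (Vr - Mr * Q) * (Ur - Nr * Q)⁻¹) :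
    Matrix.fromBlocks (1 : Matrix n n α) (-G) (-K) (1 : Matrix m m α)
      * Matrix.fromBlocks ((Ur - Nr * Q) * Ml) ((Ur - Nr * Q) * Nl)
          ((Vr - Mr * Q) * Ml) (1 + (Vr - Mr * Q) * Nl) = 1 := by
  set X := Ur - Nr * Q with hX
  set Y := Vr - Mr * Q with hY
  rw [Matrix.fromBlocks_multiply, ← Matrix.fromBlocks_one] at hdc
  rw [Matrix.fromBlocks_inj] at hdc
  obtain ⟨h1, h2, h3, h4⟩ := hdc
  -- h1 : Ml * Ur + (-Nl) * Vr = 1, h2 : Ml * Nr + (-Nl) * Mr = 0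
  have hKX : K * X = Y := by
    rw [hKdef, Matrix.mul_assoc, Matrix.nonsing_inv_mul _ hUNQ, Matrix.mul_one]
  have hMlG : Ml * G = Nl := by
    rw [hG, ← Matrix.mul_assoc, Matrix.mul_nonsing_inv _ hMl, Matrix.one_mul]
  have hMlinv : Ml⁻¹ = X - G * Y := by
    apply Matrix.inv_eq_right_inv
    have : Ml * (X - G * Y) = (Ml * Ur + (-Nl) * Vr) - (Ml * Nr + (-Nl) * Mr) * Q := by
      rw [Matrix.mul_sub, ← Matrix.mul_assoc, hMlG, hX, hY]
      simp only [Matrix.mul_sub, Matrix.neg_mul, Matrix.add_mul, Matrix.mul_assoc]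
      abel
    rw [this, h1, h2, Matrix.zero_mul, sub_zero]
  have hXGY : X - G * Y = Ml⁻¹ := hMlinv.symm
  rw [Matrix.fromBlocks_multiply, ← Matrix.fromBlocks_one, Matrix.fromBlocks_inj]
  refine ⟨?_, ?_, ?_, ?_⟩
  · -- 1 * (X * Ml) + (-G) * (Y * Ml) = 1
    rw [Matrix.one_mul, Matrix.neg_mul, ← Matrix.mul_assoc, ← sub_eq_add_neg,
      ← Matrix.sub_mul, hXGY, Matrix.nonsing_inv_mul _ hMl]
  · -- 1 * (X * Nl) + (-G) * (1 + Y * Nl) = 0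
    rw [Matrix.one_mul, Matrix.neg_mul, Matrix.mul_add, Matrix.mul_one, neg_add,
      ← Matrix.mul_assoc]
    have : X * Nl - G * Y * Nl = G := by
      rw [← Matrix.sub_mul, hXGY, ← hG]
    rw [sub_eq_add_neg] at this
    rw [add_comm (-G), ← add_assoc, this]
    abel
  · -- (-K) * (X * Ml) + 1 * (Y * Ml) = 0
    rw [Matrix.one_mul, Matrix.neg_mul, ← Matrix.mul_assoc, hKX]
    abel
  · -- (-K) * (X * Nl) + 1 * (1 + Y * Nl) = 1
    rw [Matrix.one_mul, Matrix.neg_mul, ← Matrix.mul_assoc, hKX]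
    abel
end

section
/- Closed-loop design separation (necessity): let R = [[A + (1-z)I, B, 0],[0, 0, zM_c],[I, 0, I - zP_c]] and suppose S with first block column [Φx; Φu; S_δx] satisfies S(I - R) = (I - R)S = I. Then [Φx; Φu]·[zI - A, -B]·[P_c; M_c] = [P_c; M_c]. -/
/-!
Since `S (I - R) = I`, every `W` satisfies `S ((I - R) W) = W`. The proof exhibits the column
`W = [P_c; M_c; z⁻¹ I]`, for which `(I - R) W = [Δ_c; 0; 0]` with `Δ_c = (zI - A) P_c - B M_c`;
then `S ((I - R) W)` is the first block column `[Φx; Φu; *]` of `S` times `Δ_c`, and comparing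
the first two block rows with `W` gives `Φx Δ_c = P_c` and `Φu Δ_c = M_c`.
-/

noncomputable section

namespace Matrix

variable {R n m₁ m₂ l : Type*}

theorem toRows₁_mul [Semiring R] [Fintype n] (A : Matrix (m₁ ⊕ m₂) n R) (B : Matrix n l R) :
    (A * B).toRows₁ = A.toRows₁ * B :=
  rfl

theorem toRows₂_mul [Semiring R] [Fintype n] (A : Matrix (m₁ ⊕ m₂) n R) (B : Matrix n l R) :
    (A * B).toRows₂ = A.toRows₂ * B :=
  rfl

theorem blk3_mul_fromRows [Semiring R] {n m p : Type*} [Fintype n] [Fintype m] [Fintype p]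
    (M11 : Matrix n n R) (M12 : Matrix n m R) (M13 : Matrix n p R)
    (M21 : Matrix m n R) (M22 : Matrix m m R) (M23 : Matrix m p R)
    (M31 : Matrix p n R) (M32 : Matrix p m R) (M33 : Matrix p p R)
    (X : Matrix n l R) (Y : Matrix m l R) (Z : Matrix p l R) :
    blk3 M11 M12 M13 M21 M22 M23 M31 M32 M33 * fromRows X (fromRows Y Z) =
      fromRows (M11 * X + M12 * Y + M13 * Z)
        (fromRows (M21 * X + M22 * Y + M23 * Z) (M31 * X + M32 * Y + M33 * Z)) := by
  simp only [blk3, fromBlocks_mul_fromRows, fromCols_mul_fromRows, fromRows_mul]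
  ext (_ | _ | _) _ <;> simp [add_assoc]

theorem toCols₁_mul_eq_of_mul_eq_fromRows [Ring R] [Fintype n] [Fintype m₁]
    [Fintype m₂] [DecidableEq n] {S : Matrix n (m₁ ⊕ m₂) R} {M : Matrix (m₁ ⊕ m₂) n R}
    {W : Matrix n l R} {D : Matrix m₁ l R} (hS : S * M = 1) (hW : M * W = fromRows D 0) :
    S.toCols₁ * D = W :=
  calc S.toCols₁ * D = fromCols S.toCols₁ S.toCols₂ * fromRows D (0 : Matrix m₂ l R) := by
        rw [fromCols_mul_fromRows, Matrix.mul_zero, add_zero]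
    _ = S * (M * W) := by rw [hW, fromCols_toCols]
    _ = W := by rw [← Matrix.mul_assoc, hS, Matrix.one_mul]

end Matrix

theorem one_sub_realization_mul_fromRows {K n m : Type*} [Field K] [Fintype n] [Fintype m]
    [DecidableEq n] [DecidableEq m] {z : K} (hz : z ≠ 0) (A : Matrix n n K) (B : Matrix n m K)
    (Pc : Matrix n n K) (Mc : Matrix m n K) :
    (1 - (blk3 (A + (1 - z) • 1) B 0 0 0 (z • Mc) 1 0 (1 - z • Pc) :
        Matrix (n ⊕ (m ⊕ n)) (n ⊕ (m ⊕ n)) K)) *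
        Matrix.fromRows Pc (Matrix.fromRows Mc (z⁻¹ • 1 : Matrix n n K)) =
      Matrix.fromRows ((z • 1 - A) * Pc - B * Mc) 0 := by
  have hinput : z • Mc * z⁻¹ • (1 : Matrix n n K) = Mc := by
    rw [Matrix.smul_mul, Matrix.mul_smul, Matrix.mul_one, smul_smul, mul_inv_cancel₀ hz, one_smul]
  have hdelay : (1 - z • Pc) * z⁻¹ • (1 : Matrix n n K) = z⁻¹ • 1 - Pc := by
    rw [Matrix.sub_mul, Matrix.smul_mul, Matrix.one_mul, Matrix.mul_smul, Matrix.mul_one,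
      smul_smul, mul_inv_cancel₀ hz, one_smul]
  rw [Matrix.sub_mul, Matrix.one_mul, Matrix.blk3_mul_fromRows, hinput, hdelay]
  have hplant : Pc - ((A + (1 - z) • 1) * Pc + B * Mc + 0 * (z⁻¹ • 1 : Matrix n n K)) =
      (z • 1 - A) * Pc - B * Mc := by
    simp only [Matrix.add_mul, Matrix.sub_mul, Matrix.smul_mul, Matrix.one_mul, Matrix.zero_mul]
    module
  ext (i | i | i) j <;> simp [← hplant]

theorem design_separation_necessity_general {n m : Type*} [Fintype n] [Fintype m]
    [DecidableEq n] [DecidableEq m]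
    (A : Matrix n n ℝ) (B : Matrix n m ℝ)
    (Pc : Matrix n n (RatFunc ℝ)) (Mc : Matrix m n (RatFunc ℝ))
    (Φx : Matrix n n (RatFunc ℝ)) (Φu : Matrix m n (RatFunc ℝ))
    (R S : Matrix (n ⊕ (m ⊕ n)) (n ⊕ (m ⊕ n)) (RatFunc ℝ))
    (hR : R = blk3
      (A.map (algebraMap ℝ (RatFunc ℝ))
        + (1 - (RatFunc.X : RatFunc ℝ)) • (1 : Matrix n n (RatFunc ℝ)))
      (B.map (algebraMap ℝ (RatFunc ℝ))) 0
      0 0 ((RatFunc.X : RatFunc ℝ) • Mc)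
      (1 : Matrix n n (RatFunc ℝ)) 0
      ((1 : Matrix n n (RatFunc ℝ)) - (RatFunc.X : RatFunc ℝ) • Pc))
    (h1 : S * (1 - R) = 1)
    (hcolx : ∀ (i : n) (j : n), S (Sum.inl i) (Sum.inl j) = Φx i j)
    (hcolu : ∀ (i : m) (j : n), S (Sum.inr (Sum.inl i)) (Sum.inl j) = Φu i j) :
    Φx * (((RatFunc.X : RatFunc ℝ) • (1 : Matrix n n (RatFunc ℝ))
        - A.map (algebraMap ℝ (RatFunc ℝ))) * Pc
        - B.map (algebraMap ℝ (RatFunc ℝ)) * Mc) = Pc ∧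
    Φu * (((RatFunc.X : RatFunc ℝ) • (1 : Matrix n n (RatFunc ℝ))
        - A.map (algebraMap ℝ (RatFunc ℝ))) * Pc
        - B.map (algebraMap ℝ (RatFunc ℝ)) * Mc) = Mc := by
  have hcol := Matrix.toCols₁_mul_eq_of_mul_eq_fromRows h1
    (hR ▸ one_sub_realization_mul_fromRows RatFunc.X_ne_zero _ _ Pc Mc)
  have hΦx : S.toCols₁.toRows₁ = Φx := Matrix.ext hcolx
  have hΦu : S.toCols₁.toRows₂.toRows₁ = Φu := Matrix.ext hcolu
  constructor
  · rw [← hΦx, ← Matrix.toRows₁_mul, hcol, Matrix.toRows₁_fromRows]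
  · rw [← hΦu, ← Matrix.toRows₁_mul, ← Matrix.toRows₂_mul, hcol, Matrix.toRows₂_fromRows,
      Matrix.toRows₁_fromRows]

/-- Closed-loop design separation (necessity): for the realization
`R = [[A + (1-z)I, B, 0],[0, 0, zM_c],[I, 0, I - zP_c]]` (internal state `(x, u, δ)`), if `S` is
a two-sided inverse of `I - R` whose first block column is `[Φx; Φu; Sδx]`, then
`[Φx; Φu] [zI - A, -B] [P_c; M_c] = [P_c; M_c]`, i.e. `Φx Δ_c = P_c` and `Φu Δ_c = M_c` with
`Δ_c = (zI - A) P_c - B M_c`. -/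
theorem design_separation_necessity {n m : Type*} [Fintype n] [Fintype m]
    [DecidableEq n] [DecidableEq m]
    (A : Matrix n n ℝ) (B : Matrix n m ℝ)
    (Pc : Matrix n n (RatFunc ℝ)) (Mc : Matrix m n (RatFunc ℝ))
    (Φx : Matrix n n (RatFunc ℝ)) (Φu : Matrix m n (RatFunc ℝ))
    (Sδx : Matrix n n (RatFunc ℝ))
    (R S : Matrix (n ⊕ (m ⊕ n)) (n ⊕ (m ⊕ n)) (RatFunc ℝ))
    (hR : R = blk3
      (A.map (algebraMap ℝ (RatFunc ℝ))
        + (1 - (RatFunc.X : RatFunc ℝ)) • (1 : Matrix n n (RatFunc ℝ)))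
      (B.map (algebraMap ℝ (RatFunc ℝ))) 0
      0 0 ((RatFunc.X : RatFunc ℝ) • Mc)
      (1 : Matrix n n (RatFunc ℝ)) 0
      ((1 : Matrix n n (RatFunc ℝ)) - (RatFunc.X : RatFunc ℝ) • Pc))
    (h1 : S * (1 - R) = 1) (h2 : (1 - R) * S = 1)
    (hcolx : ∀ (i : n) (j : n), S (Sum.inl i) (Sum.inl j) = Φx i j)
    (hcolu : ∀ (i : m) (j : n), S (Sum.inr (Sum.inl i)) (Sum.inl j) = Φu i j)
    (hcolδ : ∀ (i : n) (j : n), S (Sum.inr (Sum.inr i)) (Sum.inl j) = Sδx i j) :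
    Φx * (((RatFunc.X : RatFunc ℝ) • (1 : Matrix n n (RatFunc ℝ))
        - A.map (algebraMap ℝ (RatFunc ℝ))) * Pc
        - B.map (algebraMap ℝ (RatFunc ℝ)) * Mc) = Pc ∧
    Φu * (((RatFunc.X : RatFunc ℝ) • (1 : Matrix n n (RatFunc ℝ))
        - A.map (algebraMap ℝ (RatFunc ℝ))) * Pc
        - B.map (algebraMap ℝ (RatFunc ℝ)) * Mc) = Mc :=
  design_separation_necessity_general A B Pc Mc Φx Φu R S hR h1 hcolx hcolu
end
end
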